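/- Let s ∈ (1/2,1) and let θ₁, θ₂, θ₃ each satisfy 2(1+3s)/(1+s) < θᵢ < 2(1+s)/(1−s). Set γᵢ := (1+s)(θᵢ−2)/2, νᵢ := (1+s)(θᵢ−2)/(4s), and τ := max{ 2s/((θ₁−2)(1+s)), 2s/((θ₂−2)(1+s)), 2s/((θ₃−2)(1+s)) }. Suppose T > 0 and a₁, a₂, a₃ ≥ 0 satisfy s·T = γ₁a₁ + γ₂a₂ + γ₃a₃, and there are constants K₁, K₂, K₃ > 0 with aᵢ ≤ Kᵢ·T^{νᵢ} for i = 1,2,3. Then (1/2)·T − (a₁ + a₂ + a₃) ≥ (1/2 − τ) · min_{i=1,2,3} ( s/(3γᵢKᵢ) )^{1/(νᵢ−1)} > 0. -/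

import Mathlib

/-!
Mass supercriticality `θᵢ > 2(1 + 3s)/(1 + s)` says exactly `γᵢ > 2s`, i.e. `νᵢ = γᵢ/(2s) > 1`.
The Pohozaev relation `s T = ∑ γᵢ aᵢ` then gives `∑ aᵢ ≤ τ T` with `τ = maxᵢ s/γᵢ < 1/2`, so the
energy is at least `(1/2 - τ) T`. The same relation forces one term to carry a third of `s T`,
`s T / 3 ≤ γᵢ Kᵢ T ^ νᵢ`, and since `νᵢ > 1` this bounds `T` below by
`(s / (3 γᵢ Kᵢ)) ^ (1 / (νᵢ - 1))`.
-/

open Finset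

theorem mass_supercritical_exponent_bounds {s θ γ ν : ℝ} (hs : 0 < s)
    (hθ : 2 * (1 + 3 * s) / (1 + s) < θ) (hγ : γ = (1 + s) * (θ - 2) / 2)
    (hν : ν = (1 + s) * (θ - 2) / (4 * s)) : 0 < γ ∧ s / γ < 1 / 2 ∧ 1 < ν := by
  rw [div_lt_iff₀ (by linarith)] at hθ
  have hγs : 2 * s < γ := by rw [hγ]; linarith
  refine ⟨by linarith, by rw [div_lt_iff₀ (by linarith)]; linarith, ?_⟩
  rw [hν, lt_div_iff₀ (by positivity)]
  linarith

theorem two_mul_div_mul_eq_div_mul_div_two {a b c : ℝ} :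
    2 * a / (b * c) = a / (c * b / 2) := by
  rw [div_div_eq_mul_div]
  ring

theorem rpow_one_div_sub_one_le_of_mul_le_mul_rpow {c C T ν : ℝ} (hc : 0 < c) (hT : 0 < T)
    (hν : 1 < ν) (h : c * T ≤ C * T ^ ν) : (c / C) ^ (1 / (ν - 1)) ≤ T := by
  have hTν : T ^ ν = T ^ (ν - 1) * T := by
    rw [Real.rpow_sub_one hT.ne', div_mul_cancel₀ _ hT.ne']
  have hC : 0 < C := pos_of_mul_pos_left (h.trans_lt' (by positivity)) (by positivity)
  have hcC : c ≤ T ^ (ν - 1) * C :=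
    le_of_mul_le_mul_right (by linarith [hTν ▸ h]) hT
  rw [one_div, Real.rpow_inv_le_iff_of_pos (by positivity) hT.le (by linarith),
    div_le_iff₀ hC]
  exact hcC

section Pohozaev

variable {ι : Type*} {S : Finset ι} {s T : ℝ} {γ a : ι → ℝ}

theorem sum_le_mul_of_mul_eq_sum_mul {τ : ℝ} (hs : 0 < s) (hγ : ∀ i ∈ S, 0 < γ i)
    (ha : ∀ i ∈ S, 0 ≤ a i) (hτ : ∀ i ∈ S, s / γ i ≤ τ) (hpoh : s * T = ∑ i ∈ S, γ i * a i) :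
    ∑ i ∈ S, a i ≤ τ * T := by
  refine le_of_mul_le_mul_left ?_ hs
  calc s * ∑ i ∈ S, a i = ∑ i ∈ S, s * a i := mul_sum _ _ _
    _ ≤ ∑ i ∈ S, τ * (γ i * a i) := sum_le_sum fun i hi => by
        rw [← mul_assoc]
        exact mul_le_mul_of_nonneg_right ((div_le_iff₀ (hγ i hi)).mp (hτ i hi)) (ha i hi)
    _ = s * (τ * T) := by rw [← mul_sum, ← hpoh]; ring

theorem exists_rpow_le_of_mul_le_sum_mul (hS : S.Nonempty) {K ν : ι → ℝ} (hs : 0 < s)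
    (hT : 0 < T) (hγ : ∀ i ∈ S, 0 ≤ γ i) (hν : ∀ i ∈ S, 1 < ν i)
    (hpoh : s * T ≤ ∑ i ∈ S, γ i * a i) (hb : ∀ i ∈ S, a i ≤ K i * T ^ ν i) :
    ∃ i ∈ S, (s / (#S * γ i * K i)) ^ (1 / (ν i - 1)) ≤ T := by
  have hsum : ∑ _i ∈ S, s / #S * T ≤ ∑ i ∈ S, γ i * K i * T ^ ν i := by
    rw [sum_const, nsmul_eq_mul, ← mul_assoc, mul_div_cancel₀ _ (by positivity)]
    refine hpoh.trans (sum_le_sum fun i hi => ?_)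
    rw [mul_assoc]
    exact mul_le_mul_of_nonneg_left (hb i hi) (hγ i hi)
  obtain ⟨i, hi, h⟩ := exists_le_of_sum_le hS hsum
  refine ⟨i, hi, ?_⟩
  rw [mul_assoc, ← div_div]
  exact rpow_one_div_sub_one_le_of_mul_le_mul_rpow (by positivity) hT (hν i hi) h

end Pohozaev

/-- Quantitative content of Corollary 3.8 (positivity of `C_{(a,b)}`):
under the Pohozaev relation `s·T = γ₁a₁ + γ₂a₂ + γ₃a₃` and the
Gagliardo–Nirenberg-type bounds `aᵢ ≤ Kᵢ·T^(νᵢ)`, the energy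
`(1/2)·T − (a₁+a₂+a₃)` is bounded below by the positive constant
`(1/2 − τ)·min_i (s/(3γᵢKᵢ))^(1/(νᵢ−1))`. -/
theorem energy_positive_lower_bound_on_pohozaev
    (s θ₁ θ₂ θ₃ γ₁ γ₂ γ₃ ν₁ ν₂ ν₃ τ : ℝ)
    (hs : s ∈ Set.Ioo (1/2 : ℝ) 1)
    (hθ₁ : 2 * (1 + 3*s) / (1 + s) < θ₁ ∧ θ₁ < 2 * (1 + s) / (1 - s))
    (hθ₂ : 2 * (1 + 3*s) / (1 + s) < θ₂ ∧ θ₂ < 2 * (1 + s) / (1 - s))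
    (hθ₃ : 2 * (1 + 3*s) / (1 + s) < θ₃ ∧ θ₃ < 2 * (1 + s) / (1 - s))
    (hγ₁ : γ₁ = (1 + s) * (θ₁ - 2) / 2) (hγ₂ : γ₂ = (1 + s) * (θ₂ - 2) / 2)
    (hγ₃ : γ₃ = (1 + s) * (θ₃ - 2) / 2)
    (hν₁ : ν₁ = (1 + s) * (θ₁ - 2) / (4*s)) (hν₂ : ν₂ = (1 + s) * (θ₂ - 2) / (4*s))
    (hν₃ : ν₃ = (1 + s) * (θ₃ - 2) / (4*s))
    (hτ : τ = max (max (2*s / ((θ₁ - 2) * (1 + s))) (2*s / ((θ₂ - 2) * (1 + s))))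
            (2*s / ((θ₃ - 2) * (1 + s))))
    (T a₁ a₂ a₃ K₁ K₂ K₃ : ℝ)
    (hT : 0 < T) (ha₁ : 0 ≤ a₁) (ha₂ : 0 ≤ a₂) (ha₃ : 0 ≤ a₃)
    (hpoh : s * T = γ₁ * a₁ + γ₂ * a₂ + γ₃ * a₃)
    (hK₁ : 0 < K₁) (hK₂ : 0 < K₂) (hK₃ : 0 < K₃)
    (hb₁ : a₁ ≤ K₁ * T ^ ν₁) (hb₂ : a₂ ≤ K₂ * T ^ ν₂) (hb₃ : a₃ ≤ K₃ * T ^ ν₃) :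
    (1/2) * T - (a₁ + a₂ + a₃)
      ≥ (1/2 - τ) * min (min ((s / (3 * γ₁ * K₁)) ^ (1 / (ν₁ - 1)))
                             ((s / (3 * γ₂ * K₂)) ^ (1 / (ν₂ - 1))))
                        ((s / (3 * γ₃ * K₃)) ^ (1 / (ν₃ - 1)))
    ∧ 0 < (1/2 - τ) * min (min ((s / (3 * γ₁ * K₁)) ^ (1 / (ν₁ - 1)))
                               ((s / (3 * γ₂ * K₂)) ^ (1 / (ν₂ - 1))))
                          ((s / (3 * γ₃ * K₃)) ^ (1 / (ν₃ - 1))) := by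
  have hs₀ : 0 < s := by linarith [hs.1]
  obtain ⟨hγ₁₀, hsγ₁, hν₁₁⟩ := mass_supercritical_exponent_bounds hs₀ hθ₁.1 hγ₁ hν₁
  obtain ⟨hγ₂₀, hsγ₂, hν₂₁⟩ := mass_supercritical_exponent_bounds hs₀ hθ₂.1 hγ₂ hν₂
  obtain ⟨hγ₃₀, hsγ₃, hν₃₁⟩ := mass_supercritical_exponent_bounds hs₀ hθ₃.1 hγ₃ hν₃
  simp only [two_mul_div_mul_eq_div_mul_div_two, ← hγ₁, ← hγ₂, ← hγ₃] at hτ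
  have hτ_pos : 0 < 1 / 2 - τ := sub_pos.mpr (hτ ▸ max_lt (max_lt hsγ₁ hsγ₂) hsγ₃)
  have hsum : a₁ + a₂ + a₃ ≤ τ * T := by
    simpa [Fin.sum_univ_three, add_assoc] using sum_le_mul_of_mul_eq_sum_mul (S := univ)
      (γ := ![γ₁, γ₂, γ₃]) (a := ![a₁, a₂, a₃]) hs₀
      (by simp [Fin.forall_fin_succ, hγ₁₀, hγ₂₀, hγ₃₀])
      (by simp [Fin.forall_fin_succ, ha₁, ha₂, ha₃])
      (by simp [Fin.forall_fin_succ, hτ])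
      (by simp [Fin.sum_univ_three, hpoh, add_assoc])
  have hT_lower := exists_rpow_le_of_mul_le_sum_mul (S := univ) (γ := ![γ₁, γ₂, γ₃])
    (K := ![K₁, K₂, K₃]) (a := ![a₁, a₂, a₃]) (ν := ![ν₁, ν₂, ν₃]) univ_nonempty hs₀ hT
    (by simp [Fin.forall_fin_succ, hγ₁₀.le, hγ₂₀.le, hγ₃₀.le])
    (by simp [Fin.forall_fin_succ, hν₁₁, hν₂₁, hν₃₁])
    (by simp [Fin.sum_univ_three, hpoh, add_assoc])
    (by simp [Fin.forall_fin_succ, hb₁, hb₂, hb₃])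
  refine ⟨?_, mul_pos hτ_pos (by positivity)⟩
  calc _ ≥ (1 / 2 - τ) * T := by linarith
    _ ≥ _ := mul_le_mul_of_nonneg_left ?_ hτ_pos.le
  simpa [Fin.exists_fin_succ, or_assoc] using hT_lower
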